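/- There exists a constant C with 0 < C < 2 (one may take C = 1 + (4/π^{3/2}) Γ(5/4)² ≈ 1.59) such that |F(z)| ≤ C for all z with arg z ∈ [-π/2, π]. -/

import Mathlib

noncomputable def cerf (z : ℂ) : ℂ :=
  2 / Real.sqrt Real.pi * ∫ t in (0:ℝ)..1, z * Complex.exp (-((t : ℂ) * z) ^ 2)

/-- The Fresnel integral `Fr(z) = (1/2) erfc(e^{-iπ/4} z)`. -/
noncomputable def Fr (z : ℂ) : ℂ :=
  (1 - cerf (Complex.exp (-(Real.pi / 4 : ℂ) * Complex.I) * z)) / 2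

/-- `F(z) = e^{-iz²} Fr(z)`. -/
noncomputable def Ffun (z : ℂ) : ℂ := Complex.exp (-Complex.I * z ^ 2) * Fr z

/-!
Put `w = e^{-iπ/4} z`, so that `w² = -iz²` and `F(z) = e^{w²} erfc(w) / 2`. The derivative of
`s ↦ ∫₀^∞ e^{-(t+sw)²} dt + ∫₀^s w e^{-(rw)²} dr` vanishes (this is Cauchy's theorem for `e^{-ζ²}`
on the half-strip spanned by `[0, w]` and `[0, ∞)`), whence
`e^{w²} erfc(w) = (2/√π) ∫₀^∞ e^{-t²-2tw} dt`. For `Re w ≥ 0`, i.e. `arg z ∈ [-π/4, 3π/4]`, the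
integrand is bounded by `e^{-t²}` and `|F(z)| ≤ 1/2`. On the rest of the sector
`Re z · Im z ≤ 0`, so `|e^{-iz²}| ≤ 1`, and `F(z) = e^{-iz²} - F(-z)` gives `|F(z)| ≤ 3/2`.
-/

open Real Complex MeasureTheory Set Filter Topology

lemma norm_cexp_neg_sq_ofReal_add_le (t : ℝ) (u : ℂ) :
    ‖cexp (-((t : ℂ) + u) ^ 2)‖ ≤ Real.exp (‖u‖ ^ 2) * Real.exp (-t ^ 2 / 2) := by
  have hre : (-((t : ℂ) + u) ^ 2).re = -(t + u.re) ^ 2 + u.im ^ 2 := by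
    simp only [neg_re, sq, mul_re, add_re, add_im, ofReal_re, ofReal_im]; ring
  rw [norm_exp, hre, ← Real.exp_add, Real.exp_le_exp, ← normSq_eq_norm_sq, normSq_apply]
  nlinarith [sq_nonneg (t + 2 * u.re)]

lemma integrable_exp_neg_sq_div_two : Integrable fun t : ℝ => Real.exp (-t ^ 2 / 2) :=
  (integrable_exp_neg_mul_sq (b := 1 / 2) (by norm_num)).congr
    (Eventually.of_forall fun t => by ring_nf)

lemma integrable_abs_add_mul_exp_neg_sq_div_two (c : ℝ) :
    Integrable fun t : ℝ => (|t| + c) * Real.exp (-t ^ 2 / 2) := by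
  have h := ((integrable_mul_exp_neg_mul_sq (b := 1 / 2) (by norm_num)).norm).add
    (integrable_exp_neg_sq_div_two.const_mul c)
  refine h.congr (Eventually.of_forall fun t => ?_)
  simp only [Pi.add_apply, norm_mul, Real.norm_eq_abs, Real.abs_exp]
  ring_nf

lemma integrable_cexp_neg_sq_ofReal_add (u : ℂ) :
    Integrable fun t : ℝ => cexp (-((t : ℂ) + u) ^ 2) :=
  (integrable_exp_neg_sq_div_two.const_mul _).mono' (by fun_prop)
    (Eventually.of_forall fun t => norm_cexp_neg_sq_ofReal_add_le t u)

lemma norm_ofReal_add_le (t : ℝ) (u : ℂ) : ‖(t : ℂ) + u‖ ≤ |t| + ‖u‖ :=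
  (norm_add_le _ _).trans_eq (by rw [norm_real, Real.norm_eq_abs])

lemma norm_mul_cexp_neg_sq_ofReal_add_le (t : ℝ) {u : ℂ} {R : ℝ} (hu : ‖u‖ ≤ R) :
    ‖((t : ℂ) + u) * cexp (-((t : ℂ) + u) ^ 2)‖ ≤
      Real.exp (R ^ 2) * ((|t| + R) * Real.exp (-t ^ 2 / 2)) := by
  have hexp : Real.exp (‖u‖ ^ 2) ≤ Real.exp (R ^ 2) :=
    Real.exp_le_exp.2 (pow_le_pow_left₀ (norm_nonneg u) hu 2)
  have h1 : ‖(t : ℂ) + u‖ ≤ |t| + R := (norm_ofReal_add_le t u).trans (by linarith)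
  have h2 : ‖cexp (-((t : ℂ) + u) ^ 2)‖ ≤ Real.exp (R ^ 2) * Real.exp (-t ^ 2 / 2) :=
    (norm_cexp_neg_sq_ofReal_add_le t u).trans (by gcongr)
  rw [norm_mul]
  refine (mul_le_mul h1 h2 (norm_nonneg _) ((norm_nonneg _).trans h1)).trans_eq (by ring)

lemma integrable_mul_cexp_neg_sq_ofReal_add (u : ℂ) :
    Integrable fun t : ℝ => ((t : ℂ) + u) * cexp (-((t : ℂ) + u) ^ 2) :=
  ((integrable_abs_add_mul_exp_neg_sq_div_two _).const_mul _).mono' (by fun_prop)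
    (Eventually.of_forall fun t => norm_mul_cexp_neg_sq_ofReal_add_le t le_rfl)

lemma hasDerivAt_cexp_neg_sq (z : ℂ) :
    HasDerivAt (fun z => cexp (-z ^ 2)) (-2 * z * cexp (-z ^ 2)) z :=
  (hasDerivAt_pow 2 z).neg.cexp.congr_deriv (by simp only [Pi.neg_apply]; ring)

lemma tendsto_cexp_neg_sq_ofReal_add_atTop (u : ℂ) :
    Tendsto (fun t : ℝ => cexp (-((t : ℂ) + u) ^ 2)) atTop (𝓝 0) := by
  have h : Tendsto (fun t : ℝ => Real.exp (‖u‖ ^ 2) * Real.exp (-t ^ 2 / 2)) atTop (𝓝 0) := by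
    have hsq : Tendsto (fun t : ℝ => -t ^ 2 / 2) atTop atBot :=
      (tendsto_neg_atTop_atBot.comp (tendsto_pow_atTop two_ne_zero)).atBot_div_const two_pos
    simpa using (Real.tendsto_exp_atBot.comp hsq).const_mul (Real.exp (‖u‖ ^ 2))
  exact squeeze_zero_norm (norm_cexp_neg_sq_ofReal_add_le · u) h

lemma integral_Ioi_mul_cexp_neg_sq_ofReal_add (u : ℂ) :
    ∫ t in Ioi (0 : ℝ), -2 * ((t : ℂ) + u) * cexp (-((t : ℂ) + u) ^ 2) = -cexp (-u ^ 2) := by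
  have hderiv (t : ℝ) : HasDerivAt (fun t : ℝ => cexp (-((t : ℂ) + u) ^ 2))
      (-2 * ((t : ℂ) + u) * cexp (-((t : ℂ) + u) ^ 2)) t :=
    ((hasDerivAt_cexp_neg_sq _).comp_add_const _ u).comp_ofReal
  have hint : IntegrableOn (fun t : ℝ => -2 * ((t : ℂ) + u) * cexp (-((t : ℂ) + u) ^ 2)) (Ioi 0) :=
    ((integrable_mul_cexp_neg_sq_ofReal_add u).const_mul (-2)).integrableOn.congr_fun
      (fun t _ => by simp only [mul_assoc]) measurableSet_Ioi
  rw [integral_Ioi_of_hasDerivAt_of_tendsto (hderiv 0).continuousAt.continuousWithinAt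
    (fun t _ => hderiv t) hint (tendsto_cexp_neg_sq_ofReal_add_atTop u)]
  simp

/-- `gaussianTail u = ∫_u^{u+∞} e^{-ζ²} dζ`, which is `(√π / 2) erfc u`. -/
noncomputable def gaussianTail (u : ℂ) : ℂ := ∫ t in Ioi (0 : ℝ), cexp (-((t : ℂ) + u) ^ 2)

lemma integral_Ioi_exp_neg_sq : ∫ t in Ioi (0 : ℝ), Real.exp (-t ^ 2) = √π / 2 := by
  simpa using integral_gaussian_Ioi 1

lemma gaussianTail_zero : gaussianTail 0 = (√π / 2 : ℝ) := by
  rw [gaussianTail, ← integral_Ioi_exp_neg_sq, ← integral_complex_ofReal]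
  simp

lemma hasDerivAt_gaussianTail_ofReal_mul (w : ℂ) (s : ℝ) :
    HasDerivAt (fun s : ℝ => gaussianTail (s * w)) (-w * cexp (-((s : ℂ) * w) ^ 2)) s := by
  obtain ⟨R, hR⟩ : ∃ R, ∀ r ∈ Metric.ball s 1, ‖(r : ℂ) * w‖ ≤ R := by
    refine ⟨(|s| + 1) * ‖w‖, fun r hr => ?_⟩
    rw [Metric.mem_ball, Real.dist_eq] at hr
    rw [norm_mul, norm_real, Real.norm_eq_abs]
    gcongr
    linarith [abs_sub_abs_le_abs_sub r s]
  have hderiv (t r : ℝ) : HasDerivAt (fun r : ℝ => cexp (-((t : ℂ) + r * w) ^ 2))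
      (w * (-2 * ((t : ℂ) + r * w) * cexp (-((t : ℂ) + r * w) ^ 2))) r :=
    ((hasDerivAt_cexp_neg_sq _).comp r
      (((hasDerivAt_id r).ofReal_comp.mul_const w).const_add (t : ℂ))).congr_deriv (by simp only [id_eq, ofReal_one, one_mul]; ring)
  have hbound (t r : ℝ) (hr : r ∈ Metric.ball s 1) :
      ‖w * (-2 * ((t : ℂ) + r * w) * cexp (-((t : ℂ) + r * w) ^ 2))‖ ≤
        ‖w‖ * 2 * (Real.exp (R ^ 2) * ((|t| + R) * Real.exp (-t ^ 2 / 2))) := by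
    have h := norm_mul_cexp_neg_sq_ofReal_add_le t (hR r hr)
    rw [mul_assoc (-2 : ℂ), norm_mul, norm_mul, norm_neg, Complex.norm_ofNat, ← mul_assoc]
    gcongr
  have key := hasDerivAt_integral_of_dominated_loc_of_deriv_le (μ := volume.restrict (Ioi 0))
    (F := fun (r t : ℝ) => cexp (-((t : ℂ) + r * w) ^ 2))
    (Metric.ball_mem_nhds s one_pos) (Eventually.of_forall fun r => by fun_prop)
    (integrable_cexp_neg_sq_ofReal_add _).restrict (by fun_prop)
    (Eventually.of_forall fun t r hr => hbound t r hr)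
    ((integrable_abs_add_mul_exp_neg_sq_div_two R).const_mul _ |>.const_mul _).restrict
    (Eventually.of_forall fun t r _ => hderiv t r)
  have h := key.2
  rw [integral_const_mul, integral_Ioi_mul_cexp_neg_sq_ofReal_add] at h
  exact h.congr_deriv (by ring)

lemma gaussianTail_add_intervalIntegral (w : ℂ) :
    gaussianTail w + ∫ r in (0 : ℝ)..1, w * cexp (-((r : ℂ) * w) ^ 2) = (√π / 2 : ℝ) := by
  let K (s : ℝ) : ℂ := gaussianTail (s * w) + ∫ r in (0 : ℝ)..s, w * cexp (-((r : ℂ) * w) ^ 2)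
  have hK (s : ℝ) : HasDerivAt K 0 s := by
    have hint := (Continuous.integral_hasStrictDerivAt
      (f := fun r : ℝ => w * cexp (-((r : ℂ) * w) ^ 2)) (by fun_prop) 0 s).hasDerivAt
    exact ((hasDerivAt_gaussianTail_ofReal_mul w s).add hint).congr_deriv (by ring)
  have hconst := is_const_of_deriv_eq_zero (fun s => (hK s).differentiableAt)
    (fun s => (hK s).deriv) 1 0
  simpa [K, gaussianTail_zero] using hconst

lemma one_sub_cerf (w : ℂ) : 1 - cerf w = 2 / √π * gaussianTail w := by
  have hpi : (√π : ℂ) ≠ 0 := ofReal_ne_zero.2 (Real.sqrt_pos.2 pi_pos).ne'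
  rw [cerf, eq_sub_of_add_eq' (gaussianTail_add_intervalIntegral w)]
  push_cast
  field_simp
  ring

lemma cexp_neg_pi_div_four_mul_I_sq : cexp (-(π / 4 : ℂ) * I) ^ 2 = -I := by
  rw [← Complex.exp_nat_mul, ← exp_neg_pi_div_two_mul_I]
  congr 1
  push_cast
  ring

lemma re_cexp_neg_pi_div_four_mul_I_mul (z : ℂ) :
    (cexp (-(π / 4 : ℂ) * I) * z).re = √2 / 2 * (z.re + z.im) := by
  rw [show -(π / 4 : ℂ) * I = ((-(π / 4) : ℝ) : ℂ) * I by push_cast; ring, mul_re,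
    exp_ofReal_mul_I_re, exp_ofReal_mul_I_im, Real.cos_neg, Real.sin_neg,
    Real.cos_pi_div_four, Real.sin_pi_div_four]
  ring

lemma Ffun_eq_cexp_sq_mul_gaussianTail (z : ℂ) :
    Ffun z = cexp ((cexp (-(π / 4 : ℂ) * I) * z) ^ 2) *
      gaussianTail (cexp (-(π / 4 : ℂ) * I) * z) / √π := by
  rw [Ffun, Fr, one_sub_cerf, mul_pow, cexp_neg_pi_div_four_mul_I_sq]
  ring

lemma norm_cexp_sq_mul_gaussianTail_le {w : ℂ} (hw : 0 ≤ w.re) :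
    ‖cexp (w ^ 2) * gaussianTail w‖ ≤ √π / 2 := by
  rw [gaussianTail, ← integral_const_mul, ← integral_Ioi_exp_neg_sq]
  have hint : Integrable fun t : ℝ => Real.exp (-t ^ 2) := by
    simpa using integrable_exp_neg_mul_sq one_pos
  refine norm_integral_le_of_norm_le hint.integrableOn
    ((ae_restrict_iff' measurableSet_Ioi).2 (Eventually.of_forall fun t (ht : 0 < t) => ?_))
  rw [← Complex.exp_add, norm_exp, Real.exp_le_exp]
  have hre : (w ^ 2 + -((t : ℂ) + w) ^ 2).re = -t ^ 2 - 2 * t * w.re := by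
    simp only [add_re, neg_re, sq, mul_re, add_im, ofReal_re, ofReal_im]; ring
  rw [hre]
  nlinarith

lemma norm_Ffun_le_half {z : ℂ} (hz : 0 ≤ z.re + z.im) : ‖Ffun z‖ ≤ 1 / 2 := by
  have hw : 0 ≤ (cexp (-(π / 4 : ℂ) * I) * z).re := by
    rw [re_cexp_neg_pi_div_four_mul_I_mul]; positivity
  have hpi : 0 < √π := Real.sqrt_pos.2 pi_pos
  rw [Ffun_eq_cexp_sq_mul_gaussianTail, norm_div, norm_real, Real.norm_of_nonneg hpi.le,
    div_le_iff₀ hpi]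
  linarith [norm_cexp_sq_mul_gaussianTail_le hw]

lemma cerf_neg (z : ℂ) : cerf (-z) = -cerf z := by
  simp only [cerf, mul_neg, neg_sq, neg_mul, intervalIntegral.integral_neg]

lemma Ffun_add_Ffun_neg (z : ℂ) : Ffun z + Ffun (-z) = cexp (-I * z ^ 2) := by
  rw [Ffun, Ffun, Fr, Fr, neg_sq, mul_neg, cerf_neg]
  ring

lemma norm_cexp_neg_I_mul_sq (z : ℂ) : ‖cexp (-I * z ^ 2)‖ = Real.exp (2 * z.re * z.im) := by
  rw [norm_exp]
  congr 1
  simp only [neg_mul, neg_re, mul_re, I_re, I_im, sq, mul_im]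
  ring

theorem F_bound_upper_sector :
    ∃ C : ℝ, 0 < C ∧ C < 2 ∧
      ∀ z : ℂ, -(Real.pi / 2) ≤ z.arg → z.arg ≤ Real.pi → ‖Ffun z‖ ≤ C := by
  refine ⟨3 / 2, by norm_num, by norm_num, fun z hz _ => ?_⟩
  rcases le_or_gt 0 (z.re + z.im) with hsum | hsum
  · exact (norm_Ffun_le_half hsum).trans (by norm_num)
  have hneg : ‖Ffun (-z)‖ ≤ 1 / 2 := norm_Ffun_le_half (by simp only [neg_re, neg_im]; linarith)
  have hexp : ‖cexp (-I * z ^ 2)‖ ≤ 1 := by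
    rw [norm_cexp_neg_I_mul_sq, Real.exp_le_one_iff]
    rcases neg_pi_div_two_le_arg_iff.1 hz with hre | him <;> nlinarith
  calc ‖Ffun z‖ = ‖cexp (-I * z ^ 2) - Ffun (-z)‖ := by
        rw [← Ffun_add_Ffun_neg, add_sub_cancel_right]
    _ ≤ 1 + 1 / 2 := (norm_sub_le _ _).trans (add_le_add hexp hneg)
    _ = 3 / 2 := by norm_num
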